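/- arXiv:2206.01252 — 2 statements merged into one kernel-verified Lean document; each statement's English description precedes it below -/
import Mathlib

section
/- Let δ > 0, let X be a nonempty set, and let q_{ij} : X → ℝ, for distinct i, j ∈ ℕ₊ = {1,2,…}, be functions satisfying 0 < c₁ ≤ j^{1+δ} q_{ij}(x) ≤ c₂ < ∞ for all x ∈ X and all distinct i, j, for some constants c₁, c₂. Define f(i) = i^{δ/2}. Then: (i) sup_{x ∈ X, i ∈ ℕ₊} Σ_{j ≠ i} q_{ij}(x) < ∞ (condition (Q0)); (ii) sup_{x ∈ X, i ∈ ℕ₊} Σ_{j ≠ i} (f(j) - f(i)) q_{ij}(x) < ∞; and (iii) lim_{i → ∞} sup_{x ∈ X} Σ_{j ≠ i} (f(j) - f(i)) q_{ij}(x) = -∞. In particular condition (Q2) holds with f(i) = i^{δ/2}. -/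
/-!
Since `q i j x ≍ j ^ (-(1 + δ))` uniformly, each row sum is at most `∑ c₂ j ^ (-(1 + δ)) < ∞`,
and `∑ j ^ (δ/2) q i j x ≤ ∑ c₂ j ^ (-(1 + δ/2)) =: S`. The drift
`∑_{j ≠ i} (j ^ (δ/2) - i ^ (δ/2)) q i j x` is therefore at most `S - i ^ (δ/2) ∑_j q i j x`.
For `i ≠ 1` the term `j = 1` alone gives `∑_j q i j x ≥ c₁`, so the drift is at most
`S - c₁ i ^ (δ/2) → -∞`.
-/

open Filter Real

theorem summable_pnat_div_rpow (c : ℝ) {p : ℝ} (hp : 1 < p) :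
    Summable fun j : ℕ+ => c / (j : ℝ) ^ p := by
  have h : Summable fun n : ℕ => c * (1 / (n : ℝ) ^ p) :=
    (Real.summable_one_div_nat_rpow.2 hp).mul_left c
  simpa only [mul_one_div] using summable_pnat_iff_summable_nat.2 h

theorem tendsto_const_sub_mul_rpow_atBot {c s : ℝ} (hc : 0 < c) (hs : 0 < s) (S : ℝ) :
    Tendsto (fun i : ℕ+ => S - c * (i : ℝ) ^ s) atTop atBot := by
  have hcoe : Tendsto (fun i : ℕ+ => (i : ℝ)) atTop atTop :=
    tendsto_natCast_atTop_atTop.comp tendsto_PNat_val_atTop_atTop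
  exact tendsto_atBot_add_const_left _ S <| tendsto_neg_atTop_atBot.comp <|
    ((tendsto_rpow_atTop hs).comp hcoe).const_mul_atTop hc

def PowerLawRow (p c₁ c₂ : ℝ) (i : ℕ+) (a : ℕ+ → ℝ) : Prop :=
  ∀ j, i ≠ j → c₁ ≤ (j : ℝ) ^ p * a j ∧ (j : ℝ) ^ p * a j ≤ c₂

namespace PowerLawRow

variable {p s c₁ c₂ : ℝ} {i j : ℕ+} {a : ℕ+ → ℝ}

theorem div_le (ha : PowerLawRow p c₁ c₂ i a) (hij : i ≠ j) : c₁ / (j : ℝ) ^ p ≤ a j :=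
  (div_le_iff₀' (by positivity)).2 (ha j hij).1

theorem le_div (ha : PowerLawRow p c₁ c₂ i a) (hij : i ≠ j) : a j ≤ c₂ / (j : ℝ) ^ p :=
  (le_div_iff₀' (by positivity)).2 (ha j hij).2

theorem nonneg (ha : PowerLawRow p c₁ c₂ i a) (hc₁ : 0 ≤ c₁) (hij : i ≠ j) : 0 ≤ a j :=
  (div_nonneg hc₁ (by positivity)).trans (ha.div_le hij)

theorem c₂_nonneg (ha : PowerLawRow p c₁ c₂ i a) (hc₁ : 0 ≤ c₁) : 0 ≤ c₂ :=
  have h := ha (i + 1) (ne_of_lt (PNat.lt_add_right i 1))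
  hc₁.trans (h.1.trans h.2)

theorem rpow_mul_le (ha : PowerLawRow p c₁ c₂ i a) (hij : i ≠ j) :
    (j : ℝ) ^ s * a j ≤ c₂ / (j : ℝ) ^ (p - s) := by
  have hj : (0 : ℝ) < j := by positivity
  calc (j : ℝ) ^ s * a j ≤ (j : ℝ) ^ s * (c₂ / (j : ℝ) ^ p) := by
        gcongr
        exact ha.le_div hij
    _ = c₂ / (j : ℝ) ^ (p - s) := by
        rw [rpow_sub hj]
        field_simp

theorem summable (ha : PowerLawRow p c₁ c₂ i a) (hc₁ : 0 ≤ c₁) (hp : 1 < p) :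
    Summable fun j : {j // j ≠ i} => a j :=
  ((summable_pnat_div_rpow c₂ hp).subtype _).of_nonneg_of_le
    (fun j => ha.nonneg hc₁ j.2.symm) (fun j => ha.le_div j.2.symm)

theorem tsum_le (ha : PowerLawRow p c₁ c₂ i a) (hc₁ : 0 ≤ c₁) (hp : 1 < p) :
    ∑' j : {j // j ≠ i}, a j ≤ ∑' j : ℕ+, c₂ / (j : ℝ) ^ p :=
  (ha.summable hc₁ hp).tsum_le_tsum_of_inj Subtype.val Subtype.val_injective
    (fun _ _ => div_nonneg (ha.c₂_nonneg hc₁) (by positivity)) (fun j => ha.le_div j.2.symm)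
    (summable_pnat_div_rpow c₂ hp)

theorem le_tsum (ha : PowerLawRow p c₁ c₂ i a) (hc₁ : 0 ≤ c₁) (hp : 1 < p) (hi : i ≠ 1) :
    c₁ ≤ ∑' j : {j // j ≠ i}, a j := by
  have h1 : c₁ ≤ a 1 := by simpa using ha.div_le hi
  exact h1.trans <| (ha.summable hc₁ hp).le_tsum ⟨1, hi.symm⟩
    (fun j _ => ha.nonneg hc₁ j.2.symm)

theorem summable_rpow_mul (ha : PowerLawRow p c₁ c₂ i a) (hc₁ : 0 ≤ c₁) (hps : 1 < p - s) :
    Summable fun j : {j // j ≠ i} => ((j : ℕ+) : ℝ) ^ s * a j :=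
  ((summable_pnat_div_rpow c₂ hps).subtype _).of_nonneg_of_le
    (fun j => mul_nonneg (by positivity) (ha.nonneg hc₁ j.2.symm))
    (fun j => ha.rpow_mul_le j.2.symm)

theorem summable_drift (ha : PowerLawRow p c₁ c₂ i a) (hc₁ : 0 ≤ c₁) (hp : 1 < p)
    (hps : 1 < p - s) :
    Summable fun j : {j // j ≠ i} => (((j : ℕ+) : ℝ) ^ s - (i : ℝ) ^ s) * a j := by
  simpa only [sub_mul] using
    (ha.summable_rpow_mul hc₁ hps).sub ((ha.summable hc₁ hp).mul_left ((i : ℝ) ^ s))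

theorem tsum_drift_le (ha : PowerLawRow p c₁ c₂ i a) (hc₁ : 0 ≤ c₁) (hp : 1 < p)
    (hps : 1 < p - s) :
    ∑' j : {j // j ≠ i}, (((j : ℕ+) : ℝ) ^ s - (i : ℝ) ^ s) * a j ≤
      ∑' j : ℕ+, c₂ / (j : ℝ) ^ (p - s) - (i : ℝ) ^ s * ∑' j : {j // j ≠ i}, a j := by
  simp only [sub_mul]
  rw [(ha.summable_rpow_mul hc₁ hps).tsum_sub ((ha.summable hc₁ hp).mul_left _), tsum_mul_left]
  gcongr
  exact (ha.summable_rpow_mul hc₁ hps).tsum_le_tsum_of_inj Subtype.val Subtype.val_injective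
    (fun _ _ => div_nonneg (ha.c₂_nonneg hc₁) (by positivity)) (fun j => ha.rpow_mul_le j.2.symm)
    (summable_pnat_div_rpow c₂ hps)

end PowerLawRow

theorem stmt_4_general (δ : ℝ) (hδ : 0 < δ) (X : Type*)
    (q : ℕ+ → ℕ+ → X → ℝ) (c₁ c₂ : ℝ) (hc₁ : 0 < c₁)
    (hbound : ∀ (x : X) (i j : ℕ+), i ≠ j →
      c₁ ≤ ((j : ℝ)) ^ (1 + δ) * q i j x ∧ ((j : ℝ)) ^ (1 + δ) * q i j x ≤ c₂) :
    (∀ (x : X) (i : ℕ+), Summable (fun j : {j : ℕ+ // j ≠ i} => q i j x)) ∧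
    (∃ M : ℝ, ∀ (x : X) (i : ℕ+), (∑' j : {j : ℕ+ // j ≠ i}, q i j x) ≤ M) ∧
    (∀ (x : X) (i : ℕ+), Summable
      (fun j : {j : ℕ+ // j ≠ i} =>
        (((j : ℕ+) : ℝ) ^ (δ / 2) - ((i : ℝ)) ^ (δ / 2)) * q i j x)) ∧
    (∃ M : ℝ, ∀ (x : X) (i : ℕ+),
      (∑' j : {j : ℕ+ // j ≠ i},
        (((j : ℕ+) : ℝ) ^ (δ / 2) - ((i : ℝ)) ^ (δ / 2)) * q i j x) ≤ M) ∧
    (∀ C : ℝ, ∃ N : ℕ+, ∀ i : ℕ+, N ≤ i → ∀ x : X,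
      (∑' j : {j : ℕ+ // j ≠ i},
        (((j : ℕ+) : ℝ) ^ (δ / 2) - ((i : ℝ)) ^ (δ / 2)) * q i j x) ≤ C) := by
  have hrow (x : X) (i : ℕ+) : PowerLawRow (1 + δ) c₁ c₂ i (fun j => q i j x) := hbound x i
  have hp : 1 < 1 + δ := by linarith
  have hps : 1 < 1 + δ - δ / 2 := by linarith
  set S := ∑' j : ℕ+, c₂ / (j : ℝ) ^ (1 + δ - δ / 2)
  have hdrift (x : X) (i : ℕ+) := (hrow x i).tsum_drift_le hc₁.le hp hps
  refine ⟨fun x i => (hrow x i).summable hc₁.le hp,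
    ⟨_, fun x i => (hrow x i).tsum_le hc₁.le hp⟩,
    fun x i => (hrow x i).summable_drift hc₁.le hp hps, ⟨S, fun x i => ?_⟩, fun C => ?_⟩
  · have hsub_nonneg : 0 ≤ (i : ℝ) ^ (δ / 2) * ∑' j : {j // j ≠ i}, q i j x :=
      mul_nonneg (by positivity) (tsum_nonneg fun j => (hrow x i).nonneg hc₁.le j.2.symm)
    linarith [hdrift x i]
  · obtain ⟨N, hN⟩ := (((tendsto_const_sub_mul_rpow_atBot hc₁ (half_pos hδ) S).eventually_le_atBot
      C).and (eventually_ne_atTop 1)).exists_forall_of_atTop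
    refine ⟨N, fun i hi x => ?_⟩
    obtain ⟨hC, hi1⟩ := hN i hi
    have hlow := mul_le_mul_of_nonneg_left ((hrow x i).le_tsum hc₁.le hp hi1)
      (by positivity : (0 : ℝ) ≤ (i : ℝ) ^ (δ / 2))
    linarith [hdrift x i]

theorem stmt_4 (δ : ℝ) (hδ : 0 < δ) (X : Type*) [Nonempty X]
    (q : ℕ+ → ℕ+ → X → ℝ) (c₁ c₂ : ℝ) (hc₁ : 0 < c₁)
    (hbound : ∀ (x : X) (i j : ℕ+), i ≠ j →
      c₁ ≤ ((j : ℝ)) ^ (1 + δ) * q i j x ∧ ((j : ℝ)) ^ (1 + δ) * q i j x ≤ c₂) :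
    (∀ (x : X) (i : ℕ+), Summable (fun j : {j : ℕ+ // j ≠ i} => q i j x)) ∧
    (∃ M : ℝ, ∀ (x : X) (i : ℕ+), (∑' j : {j : ℕ+ // j ≠ i}, q i j x) ≤ M) ∧
    (∀ (x : X) (i : ℕ+), Summable
      (fun j : {j : ℕ+ // j ≠ i} =>
        (((j : ℕ+) : ℝ) ^ (δ / 2) - ((i : ℝ)) ^ (δ / 2)) * q i j x)) ∧
    (∃ M : ℝ, ∀ (x : X) (i : ℕ+),
      (∑' j : {j : ℕ+ // j ≠ i},
        (((j : ℕ+) : ℝ) ^ (δ / 2) - ((i : ℝ)) ^ (δ / 2)) * q i j x) ≤ M) ∧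
    (∀ C : ℝ, ∃ N : ℕ+, ∀ i : ℕ+, N ≤ i → ∀ x : X,
      (∑' j : {j : ℕ+ // j ≠ i},
        (((j : ℕ+) : ℝ) ^ (δ / 2) - ((i : ℝ)) ^ (δ / 2)) * q i j x) ≤ C) :=
  stmt_4_general δ hδ X q c₁ c₂ hc₁ hbound
end

section
/- Let m ∈ ℕ₊, M > 0, let X be a nonempty set, and let q_{ij} : X → ℝ, for distinct i, j ∈ ℕ₊ = {1,2,…}, satisfy: q_{ij}(x) = 0 whenever |i - j| > m; q_{ij}(x) ∈ (0, M] whenever 0 < |i - j| ≤ m; and α := inf{q_{ij}(x) : x ∈ X, i > m, i - m ≤ j ≤ i - 1} > β := sup{q_{ij}(x) : x ∈ X, i > m, i + 1 ≤ j ≤ i + m}. Then with f(i) = i²: (i) sup_{x ∈ X, i ∈ ℕ₊} Σ_{j ≠ i} q_{ij}(x) ≤ 2mM (condition (Q0)); (ii) sup_{x ∈ X, i ∈ ℕ₊} Σ_{j ≠ i} (f(j) - f(i)) q_{ij}(x) < ∞; and (iii) lim_{i → ∞} sup_{x ∈ X} Σ_{j ≠ i} (f(j) - f(i)) q_{ij}(x)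 = -∞. In particular condition (Q2) holds with f(i) = i². -/
/-!
Only the indices `j` with `0 < |i - j| ≤ m`, at most `2m` of them, contribute, so every sum is
finite, and bounding each rate by `M` gives (Q0). For `i > m`, pair `j = i - d` with `j = i + d`:
since `(i ∓ d)² - i² = d² ∓ 2id`, the downward rate `≥ α` and the upward rate `≤ β` make the pair
contribute at most `2id(β - α) + d²(α + β) ≤ 2i(β - α) + m²(α + β)`. Summing over `1 ≤ d ≤ m`
bounds the drift by `2m(β - α)i + m³(α + β)`, which tends to `-∞`; for the finitely many `i ≤ m`
the crude bound `j² ≤ (2m)²` suffices.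
-/

open Finset Filter

def band (i m : ℕ+) : Finset ℕ+ :=
  (Iic (i + m)).filter fun j => j ≠ i ∧ |(i : ℤ) - j| ≤ m

theorem PNat.coe_sub_of_lt {a b : ℕ+} (h : b < a) : ((a - b : ℕ+) : ℕ) = a - b := by
  rw [PNat.sub_coe, if_pos h]

theorem sq_sub_sq_mul_add_sq_sub_sq_mul_le {n d K α β a b : ℝ} (hd : 1 ≤ d) (hdK : d ≤ K)
    (hKn : K < n) (hαβ : β < α) (ha : α ≤ a) (hb : 0 ≤ b) (hbβ : b ≤ β) :
    ((n - d) ^ 2 - n ^ 2) * a + ((n + d) ^ 2 - n ^ 2) * b ≤ 2 * (β - α) * n + K ^ 2 * (α + β) := by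
  have hdown : ((n - d) ^ 2 - n ^ 2) * a ≤ ((n - d) ^ 2 - n ^ 2) * α :=
    mul_le_mul_of_nonpos_left ha (by nlinarith)
  have hup : ((n + d) ^ 2 - n ^ 2) * b ≤ ((n + d) ^ 2 - n ^ 2) * β :=
    mul_le_mul_of_nonneg_left hbβ (by nlinarith)
  have hlin : 0 ≤ (d - 1) * (n * (α - β)) := mul_nonneg (by linarith) (by nlinarith)
  have hquad : 0 ≤ (K ^ 2 - d ^ 2) * (α + β) := mul_nonneg (by nlinarith) (by linarith)
  linarith

namespace band

variable {i m j : ℕ+}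

theorem mem : j ∈ band i m ↔ j ≠ i ∧ |(i : ℤ) - j| ≤ m := by
  simp only [band, mem_filter, mem_Iic, and_iff_right_iff_imp, and_imp, abs_le,
    ← PNat.coe_le_coe, PNat.add_coe]
  omega

theorem le_add_of_mem (hj : j ∈ band i m) : (j : ℕ) ≤ i + m := by
  have := abs_le.1 (mem.1 hj).2
  omega

/- Only an inclusion in general: in `ℕ+`, `i - d` is truncated to `1` when `i ≤ d`. -/
theorem subset_union (i m : ℕ+) :
    band i m ⊆ (Icc 1 m).image (i - ·) ∪ (Icc 1 m).image (i + ·) := by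
  intro j hj
  rw [mem, abs_le, ne_eq, ← PNat.coe_inj] at hj
  simp only [mem_union, mem_image, mem_Icc]
  have := j.pos
  rcases lt_or_gt_of_ne hj.1 with h | h
  · refine .inl ⟨i - j, ?_⟩
    simp only [← PNat.coe_inj, ← PNat.coe_le_coe, PNat.sub_coe, PNat.one_coe, ← PNat.coe_lt_coe]
    split_ifs <;> omega
  · refine .inr ⟨j - i, ?_⟩
    simp only [← PNat.coe_inj, ← PNat.coe_le_coe, PNat.sub_coe, PNat.add_coe, PNat.one_coe,
      ← PNat.coe_lt_coe]
    split_ifs <;> omega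

theorem eq_union (h : m < i) :
    band i m = (Icc 1 m).image (i - ·) ∪ (Icc 1 m).image (i + ·) := by
  refine (subset_union i m).antisymm fun j hj => ?_
  simp only [mem_union, mem_image, mem_Icc] at hj
  rw [mem, abs_le, ne_eq, ← PNat.coe_inj]
  rw [← PNat.coe_lt_coe] at h
  rcases hj with ⟨d, ⟨-, hd⟩, rfl⟩ | ⟨d, ⟨-, hd⟩, rfl⟩ <;> have := d.pos <;>
    rw [← PNat.coe_le_coe] at hd
  · rw [PNat.coe_sub_of_lt ((PNat.coe_lt_coe _ _).1 (by omega))]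
    omega
  · rw [PNat.add_coe]
    omega

theorem card_le (i m : ℕ+) : #(band i m) ≤ 2 * m :=
  calc #(band i m) ≤ #((Icc 1 m).image (i - ·)) + #((Icc 1 m).image (i + ·)) :=
        (card_le_card (subset_union i m)).trans (card_union_le _ _)
    _ ≤ #(Icc 1 m) + #(Icc 1 m) := add_le_add card_image_le card_image_le
    _ = 2 * m := by rw [PNat.card_Icc, PNat.one_coe]; omega

theorem sum_eq_sum_Icc {α : Type*} [AddCommMonoid α] (h : m < i) (g : ℕ+ → α) :
    ∑ j ∈ band i m, g j = ∑ d ∈ Icc 1 m, (g (i - d) + g (i + d)) := by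
  have h' := (PNat.coe_lt_coe _ _).2 h
  have hsub : Set.InjOn (i - ·) (Icc 1 m) := by
    intro a ha b hb hab
    simp only [coe_Icc, Set.mem_Icc, ← PNat.coe_le_coe, ← PNat.coe_inj, PNat.sub_coe,
      ← PNat.coe_lt_coe] at ha hb hab ⊢
    split_ifs at hab <;> omega
  have hdisj : Disjoint ((Icc 1 m).image (i - ·)) ((Icc 1 m).image (i + ·)) := by
    simp only [disjoint_left, mem_image, mem_Icc, not_exists, not_and]
    rintro _ ⟨a, ha, rfl⟩ b - hab
    simp only [← PNat.coe_le_coe, ← PNat.coe_inj, PNat.sub_coe, PNat.add_coe,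
      ← PNat.coe_lt_coe] at ha hab
    have := b.pos
    split_ifs at hab <;> omega
  rw [eq_union h, sum_union hdisj, sum_image hsub, sum_image (add_right_injective i).injOn,
    sum_add_distrib]

theorem hasSum_subtype_ne {α : Type*} [AddCommMonoid α] [TopologicalSpace α] {g : ℕ+ → α}
    (hg : ∀ j, j ≠ i → (m : ℤ) < |(i : ℤ) - j| → g j = 0) :
    HasSum (fun j : {j // j ≠ i} => g j) (∑ j ∈ band i m, g j) := by
  have hsum : ∑ j ∈ (band i m).subtype (· ≠ i), g j = ∑ j ∈ band i m, g j := by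
    rw [sum_subtype_eq_sum_filter, filter_true_of_mem fun j hj => (mem.1 hj).1]
  rw [← hsum]
  refine hasSum_sum_of_ne_finset_zero fun j hj => hg j j.2 ?_
  rw [mem_subtype, mem, not_and, not_le] at hj
  exact hj j.2

theorem sum_le_two_mul_mul {r : ℕ+ → ℝ} {M : ℝ} (hM : 0 ≤ M) (hr : ∀ j ∈ band i m, r j ≤ M) :
    ∑ j ∈ band i m, r j ≤ 2 * m * M :=
  calc ∑ j ∈ band i m, r j ≤ #(band i m) • M := sum_le_card_nsmul _ _ _ hr
    _ ≤ 2 * m * M := by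
      rw [nsmul_eq_mul]
      gcongr
      exact_mod_cast card_le i m

theorem sum_sq_sub_sq_mul_le_of_le (h : i ≤ m) {r : ℕ+ → ℝ} {M : ℝ} (hM : 0 ≤ M)
    (hr : ∀ j ∈ band i m, 0 ≤ r j ∧ r j ≤ M) :
    ∑ j ∈ band i m, ((j : ℝ) ^ 2 - (i : ℝ) ^ 2) * r j ≤ 8 * m ^ 3 * M := by
  have hterm : ∀ j ∈ band i m, ((j : ℝ) ^ 2 - (i : ℝ) ^ 2) * r j ≤ (2 * m) ^ 2 * M := by
    intro j hj
    have hj2m : (j : ℝ) ≤ 2 * m := by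
      have := le_add_of_mem hj
      rw [← PNat.coe_le_coe] at h
      exact_mod_cast (by omega : (j : ℕ) ≤ 2 * m)
    obtain ⟨hr0, hrM⟩ := hr j hj
    calc ((j : ℝ) ^ 2 - (i : ℝ) ^ 2) * r j ≤ (j : ℝ) ^ 2 * r j := by nlinarith
      _ ≤ (2 * m) ^ 2 * M := by gcongr
  calc ∑ j ∈ band i m, ((j : ℝ) ^ 2 - (i : ℝ) ^ 2) * r j ≤ 2 * m * ((2 * m) ^ 2 * M) :=
        sum_le_two_mul_mul (by positivity) hterm
    _ = 8 * m ^ 3 * M := by ring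

theorem sum_sq_sub_sq_mul_le (h : m < i) {r : ℕ+ → ℝ} {α β : ℝ} (hαβ : β < α)
    (hdown : ∀ j ∈ band i m, j < i → α ≤ r j)
    (hup : ∀ j ∈ band i m, i < j → 0 ≤ r j ∧ r j ≤ β) :
    ∑ j ∈ band i m, ((j : ℝ) ^ 2 - (i : ℝ) ^ 2) * r j ≤ 2 * m * (β - α) * i + m ^ 3 * (α + β) := by
  have hpair : ∀ d ∈ Icc 1 m, ((((i - d : ℕ+) : ℝ) ^ 2 - (i : ℝ) ^ 2) * r (i - d) +
      (((i + d : ℕ+) : ℝ) ^ 2 - (i : ℝ) ^ 2) * r (i + d)) ≤ 2 * (β - α) * i + m ^ 2 * (α + β) := by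
    intro d hd
    have hsub : i - d ∈ band i m := eq_union h ▸ mem_union_left _ (mem_image_of_mem _ hd)
    have hadd : i + d ∈ band i m := eq_union h ▸ mem_union_right _ (mem_image_of_mem _ hd)
    have hd' := mem_Icc.1 hd
    simp only [← PNat.coe_le_coe, PNat.one_coe] at hd'
    rw [← PNat.coe_lt_coe] at h
    have hdi : d < i := (PNat.coe_lt_coe _ _).1 (by omega)
    have hsub_lt : i - d < i := (PNat.coe_lt_coe _ _).1 (by rw [PNat.coe_sub_of_lt hdi]; omega)
    have hup' := hup _ hadd (PNat.lt_add_right i d)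
    rw [PNat.coe_sub_of_lt hdi, PNat.add_coe, Nat.cast_sub (by omega), Nat.cast_add]
    exact sq_sub_sq_mul_add_sq_sub_sq_mul_le (by exact_mod_cast hd'.1) (by exact_mod_cast hd'.2)
      (by exact_mod_cast h) hαβ (hdown _ hsub hsub_lt) hup'.1 hup'.2
  calc ∑ j ∈ band i m, ((j : ℝ) ^ 2 - (i : ℝ) ^ 2) * r j
      ≤ ∑ _d ∈ Icc 1 m, (2 * (β - α) * i + m ^ 2 * (α + β)) := by
        rw [sum_eq_sum_Icc h]
        exact sum_le_sum hpair
    _ = 2 * m * (β - α) * i + m ^ 3 * (α + β) := by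
        rw [sum_const, PNat.card_Icc, PNat.one_coe, nsmul_eq_mul, Nat.add_sub_cancel]
        ring

end band

theorem stmt_5_general (m : ℕ+) (M : ℝ) (hM : 0 < M) (X : Type*)
    (q : ℕ+ → ℕ+ → X → ℝ)
    (hzero : ∀ (x : X) (i j : ℕ+), i ≠ j → (m : ℤ) < |(i : ℤ) - (j : ℤ)| → q i j x = 0)
    (hband : ∀ (x : X) (i j : ℕ+), i ≠ j → |(i : ℤ) - (j : ℤ)| ≤ (m : ℤ) →
      0 < q i j x ∧ q i j x ≤ M)
    (α β : ℝ) (hαβ : β < α)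
    (hα : ∀ (x : X) (i j : ℕ+), (m : ℕ) < (i : ℕ) →
      (i : ℤ) - (m : ℤ) ≤ (j : ℤ) → (j : ℤ) ≤ (i : ℤ) - 1 → α ≤ q i j x)
    (hβ : ∀ (x : X) (i j : ℕ+), (m : ℕ) < (i : ℕ) →
      (i : ℤ) + 1 ≤ (j : ℤ) → (j : ℤ) ≤ (i : ℤ) + (m : ℤ) → q i j x ≤ β) :
    (∀ (x : X) (i : ℕ+), Summable (fun j : {j : ℕ+ // j ≠ i} => q i j x)) ∧
    (∀ (x : X) (i : ℕ+), (∑' j : {j : ℕ+ // j ≠ i}, q i j x) ≤ 2 * (m : ℝ) * M) ∧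
    (∀ (x : X) (i : ℕ+), Summable
      (fun j : {j : ℕ+ // j ≠ i} => (((j : ℕ+) : ℝ) ^ 2 - ((i : ℝ)) ^ 2) * q i j x)) ∧
    (∃ C : ℝ, ∀ (x : X) (i : ℕ+),
      (∑' j : {j : ℕ+ // j ≠ i}, (((j : ℕ+) : ℝ) ^ 2 - ((i : ℝ)) ^ 2) * q i j x) ≤ C) ∧
    (∀ C : ℝ, ∃ N : ℕ+, ∀ i : ℕ+, N ≤ i → ∀ x : X,
      (∑' j : {j : ℕ+ // j ≠ i}, (((j : ℕ+) : ℝ) ^ 2 - ((i : ℝ)) ^ 2) * q i j x) ≤ C) := by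
  have hrate (x : X) (i : ℕ+) :
      HasSum (fun j : {j // j ≠ i} => q i j x) (∑ j ∈ band i m, q i j x) :=
    band.hasSum_subtype_ne fun j hji hj => hzero x i j hji.symm hj
  have hdrift (x : X) (i : ℕ+) :
      HasSum (fun j : {j // j ≠ i} => ((j : ℝ) ^ 2 - (i : ℝ) ^ 2) * q i j x)
        (∑ j ∈ band i m, ((j : ℝ) ^ 2 - (i : ℝ) ^ 2) * q i j x) :=
    band.hasSum_subtype_ne fun j hji hj => by rw [hzero x i j hji.symm hj, mul_zero]
  have hq (x : X) (i : ℕ+) : ∀ j ∈ band i m, 0 < q i j x ∧ q i j x ≤ M := fun j hj =>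
    hband x i j (band.mem.1 hj).1.symm (band.mem.1 hj).2
  have hfar (x : X) (i : ℕ+) (h : m < i) :
      ∑ j ∈ band i m, ((j : ℝ) ^ 2 - (i : ℝ) ^ 2) * q i j x ≤
        2 * m * (β - α) * i + m ^ 3 * (α + β) := by
    have h' := (PNat.coe_lt_coe _ _).2 h
    refine band.sum_sq_sub_sq_mul_le h hαβ (fun j hj hlt => ?_) (fun j hj hlt => ?_) <;>
      have := abs_le.1 (band.mem.1 hj).2 <;> rw [← PNat.coe_lt_coe] at hlt
    · exact hα x i j h' (by omega) (by omega)
    · exact ⟨(hq x i j hj).1.le, hβ x i j h' (by omega) (by omega)⟩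
  have hslope : 2 * (m : ℝ) * (β - α) < 0 := mul_neg_of_pos_of_neg (by positivity) (by linarith)
  have hlim : Tendsto (fun i : ℕ+ => 2 * m * (β - α) * i + m ^ 3 * (α + β)) atTop atBot :=
    tendsto_atBot_add_const_right _ _ <| Tendsto.const_mul_atTop_of_neg hslope
      (tendsto_natCast_atTop_atTop.comp tendsto_PNat_val_atTop_atTop)
  refine ⟨fun x i => (hrate x i).summable, fun x i => ?_, fun x i => (hdrift x i).summable,
    ⟨max (8 * m ^ 3 * M) (m ^ 3 * (α + β)), fun x i => ?_⟩, fun C => ?_⟩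
  · rw [(hrate x i).tsum_eq]
    exact band.sum_le_two_mul_mul hM.le fun j hj => (hq x i j hj).2
  · rw [(hdrift x i).tsum_eq]
    rcases le_or_gt i m with h | h
    · exact (band.sum_sq_sub_sq_mul_le_of_le h hM.le fun j hj =>
        ⟨(hq x i j hj).1.le, (hq x i j hj).2⟩).trans (le_max_left _ _)
    · refine (hfar x i h).trans (le_trans ?_ (le_max_right _ _))
      linarith [mul_neg_of_neg_of_pos hslope (show (0 : ℝ) < i by positivity)]
  · obtain ⟨N, hN⟩ :=
      eventually_atTop.1 ((eventually_gt_atTop m).and (hlim.eventually_le_atBot C))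
    exact ⟨N, fun i hi x => (hdrift x i).tsum_eq ▸ (hfar x i (hN i hi).1).trans (hN i hi).2⟩

theorem stmt_5 (m : ℕ+) (M : ℝ) (hM : 0 < M) (X : Type*) [Nonempty X]
    (q : ℕ+ → ℕ+ → X → ℝ)
    (hzero : ∀ (x : X) (i j : ℕ+), i ≠ j → (m : ℤ) < |(i : ℤ) - (j : ℤ)| → q i j x = 0)
    (hband : ∀ (x : X) (i j : ℕ+), i ≠ j → |(i : ℤ) - (j : ℤ)| ≤ (m : ℤ) →
      0 < q i j x ∧ q i j x ≤ M)
    (α β : ℝ) (hαβ : β < α)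
    (hα : ∀ (x : X) (i j : ℕ+), (m : ℕ) < (i : ℕ) →
      (i : ℤ) - (m : ℤ) ≤ (j : ℤ) → (j : ℤ) ≤ (i : ℤ) - 1 → α ≤ q i j x)
    (hβ : ∀ (x : X) (i j : ℕ+), (m : ℕ) < (i : ℕ) →
      (i : ℤ) + 1 ≤ (j : ℤ) → (j : ℤ) ≤ (i : ℤ) + (m : ℤ) → q i j x ≤ β) :
    (∀ (x : X) (i : ℕ+), Summable (fun j : {j : ℕ+ // j ≠ i} => q i j x)) ∧
    (∀ (x : X) (i : ℕ+), (∑' j : {j : ℕ+ // j ≠ i}, q i j x) ≤ 2 * (m : ℝ) * M) ∧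
    (∀ (x : X) (i : ℕ+), Summable
      (fun j : {j : ℕ+ // j ≠ i} => (((j : ℕ+) : ℝ) ^ 2 - ((i : ℝ)) ^ 2) * q i j x)) ∧
    (∃ C : ℝ, ∀ (x : X) (i : ℕ+),
      (∑' j : {j : ℕ+ // j ≠ i}, (((j : ℕ+) : ℝ) ^ 2 - ((i : ℝ)) ^ 2) * q i j x) ≤ C) ∧
    (∀ C : ℝ, ∃ N : ℕ+, ∀ i : ℕ+, N ≤ i → ∀ x : X,
      (∑' j : {j : ℕ+ // j ≠ i}, (((j : ℕ+) : ℝ) ^ 2 - ((i : ℝ)) ^ 2) * q i j x) ≤ C) :=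
  stmt_5_general m M hM X q hzero hband α β hαβ hα hβ
end
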